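/- Martingale coboundary decomposition with sup-norm error O(n^{1/q+ε}). In the setting of the corrector bounds (effective rates, F_ω = sup_x|f_ω(x)| ∈ L^q(ℙ), μ_ω(f_ω) = 0 a.s., and χ_{ω,n} = Σ_{s>n} R_{θ^n ω, s−n} f_{θ^s ω}), fix ω in the full-measure set where the rates hold and let (X_{ω,j})_{j≥0} be the Markov chain with initial law μ_ω and transition kernel R_{θ^j ω} from time j to time j+1. Define, for n ≥ 1, M_{ω,n} = f_{θ^n ω}(X_{ω,n}) + χ_{ω,n}(X_{ω,n}) − χ_{ω,n−1}(X_{ω,n−1}). Then (M_{ω,n})_{n≥1} is a martingale-difference sequence with respect to the filtration σ(X_{ω,0},…,X_{ω,n}), and for every ε > 0, for ℙ-a.e. ω there is a finite constant C_ω such that for all n ≥ 1, almost surely |S_n^ω f − Σ_{j=1}^{n−1} M_{ω,j}| ≤ C_ω n^{1/q + ε}, where S_n^ω f = Σ_{j=0}^{n−1} f_{θ^j ω}(X_{ω,j}). -/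

import Mathlib

open MeasureTheory ProbabilityTheory Filter

noncomputable section

variable {𝒴 X : Type*} [MeasurableSpace 𝒴] [MeasurableSpace X]

/-- The left shift `θ` on `Ω = 𝒴^ℤ`. -/
def shift (ω : ℤ → 𝒴) : ℤ → 𝒴 := fun n => ω (n + 1)

/-- `θ^{-n} ω`. -/
def shiftBack (n : ℕ) (ω : ℤ → 𝒴) : ℤ → 𝒴 := fun s => ω (s - n)

/-- The σ-algebra `F_S` generated by the coordinate maps `ω ↦ ω s`, `s ∈ S`. -/
def coordSigma (𝒴 : Type*) [m𝒴 : MeasurableSpace 𝒴] (S : Set ℤ) :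
    MeasurableSpace (ℤ → 𝒴) :=
  ⨆ s ∈ S, m𝒴.comap fun ω => ω s

/-- The upper ψ-mixing coefficients `ψ_U(n)`. -/
def psiU (P : Measure (ℤ → 𝒴)) (n : ℕ) : ℝ :=
  sSup { r : ℝ | ∃ k : ℤ, ∃ A B : Set (ℤ → 𝒴),
    MeasurableSet[coordSigma 𝒴 {s | s ≤ k}] A ∧
    MeasurableSet[coordSigma 𝒴 {s | k + n ≤ s}] B ∧
    0 < (P A).toReal * (P B).toReal ∧
    r = (P (A ∩ B)).toReal / ((P A).toReal * (P B).toReal) - 1 }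

/-- The `n`-step kernel composition `R_{ω,n} = R_{ω_0} ∘ R_{ω_1} ∘ ⋯ ∘ R_{ω_{n-1}}`. -/
def Rcomp (R : 𝒴 → Kernel X X) : ℕ → (ℤ → 𝒴) → Kernel X X
  | 0, _ => Kernel.id
  | n + 1, ω => (Rcomp R n (shift ω)) ∘ₖ R (ω 0)

/-- `‖κ − μ‖_∞`: the supremum over measurable `g` with `sup|g| ≤ 1` and over `x`
of `|κ g (x) − μ(g)|`. -/
def opDist (κ : Kernel X X) (μ : Measure X) : ℝ :=
  sSup { r : ℝ | ∃ g : X → ℝ, Measurable g ∧ (∀ x, |g x| ≤ 1) ∧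
    ∃ x : X, r = |(∫ y, g y ∂(κ x)) - ∫ y, g y ∂μ| }

/-- The random Doeblin condition: ℙ-a.s.,
`R_{θ^{-n_ω}ω, n_ω}(x, Γ) ≥ γ_ω m_ω(Γ)` for all `x` and all measurable `Γ`. -/
def Doeblin (P : Measure (ℤ → 𝒴)) (R : 𝒴 → Kernel X X)
    (nD : (ℤ → 𝒴) → ℕ) (γ : (ℤ → 𝒴) → ℝ) (m : (ℤ → 𝒴) → Measure X) : Prop :=
  ∀ᵐ ω ∂P, ∀ x : X, ∀ Γ : Set X, MeasurableSet Γ →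
    ENNReal.ofReal (γ ω) * m ω Γ ≤ Rcomp R (nD ω) (shiftBack (nD ω) ω) x Γ

/-- Equivariance `(R_ω)^* μ_ω = μ_{θ ω}`, ℙ-a.s. -/
def Equivariant (P : Measure (ℤ → 𝒴)) (R : 𝒴 → Kernel X X)
    (μ : (ℤ → 𝒴) → Measure X) : Prop :=
  ∀ᵐ ω ∂P, ∀ Γ : Set X, MeasurableSet Γ →
    μ (shift ω) Γ = ∫⁻ x, R (ω 0) x Γ ∂(μ ω)

/-- The effective geometric ergodicity rates for a given random variable `K` and
exponent `p`: ℙ-a.s., for all `n`,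
`max(‖R_{θ^{-n}ω,n} − μ_ω‖_∞, ‖R_{ω,n} − μ_{θ^n ω}‖_∞) ≤ K(ω) ρ^{n/p}`. -/
def RateFor (P : Measure (ℤ → 𝒴)) (R : 𝒴 → Kernel X X)
    (μ : (ℤ → 𝒴) → Measure X) (ρ p : ℝ) (K : (ℤ → 𝒴) → ℝ) : Prop :=
  ∀ᵐ ω ∂P, ∀ n : ℕ,
    max (opDist (Rcomp R n (shiftBack n ω)) (μ ω))
        (opDist (Rcomp R n ω) (μ (shift^[n] ω))) ≤ K ω * ρ ^ ((n : ℝ) / p)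

/-- Effective rates: for every finite `p ≥ 1` there is `K_p ∈ L^p(ℙ)`
realizing the exponential rates with exponent `ρ^{n/p}`. -/
def EffectiveRates (P : Measure (ℤ → 𝒴)) (R : 𝒴 → Kernel X X)
    (μ : (ℤ → 𝒴) → Measure X) (ρ : ℝ) : Prop :=
  ∀ p : ℝ, 1 ≤ p → ∃ K : (ℤ → 𝒴) → ℝ,
    MemLp K (ENNReal.ofReal p) P ∧ RateFor P R μ ρ p K

/-- The corrector `χ_{ω,n}(x) = Σ_{s=n+1}^∞ (R_{θ^n ω, s-n} f_{θ^s ω})(x)`. -/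
def corrector (R : 𝒴 → Kernel X X) (f : (ℤ → 𝒴) × X → ℝ)
    (ω : ℤ → 𝒴) (n : ℕ) (x : X) : ℝ :=
  ∑' k : ℕ, ∫ y, f (shift^[n + 1 + k] ω, y) ∂((Rcomp R (k + 1) (shift^[n] ω)) x)

/-- The filtration `σ(X_0, …, X_j)` generated by a process. -/
def chainFilt {Ω' X : Type*} [MeasurableSpace X] (Xc : ℕ → Ω' → X) (j : ℕ) :
    MeasurableSpace Ω' :=
  ⨆ i ∈ Set.Iic j, MeasurableSpace.comap (Xc i) inferInstance

/-!
Each summand of the corrector is the deviation of `R_{θ^n ω, k+1} f_{θ^{n+1+k} ω}` from its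
`μ_{θ^{n+1+k} ω}`-mean, which vanishes; so by the effective rates it is at most
`F(θ^{n+1+k} ω) K_p(θ^n ω) ρ^{(k+1)/p}`. A stationary sequence with finite `p`-th moment is
`O(n^e)` whenever `p e > 1` (Borel–Cantelli), so `F` and `K_p` grow polynomially along a.e.
orbit, `χ_{ω,n}` converges, and `sup_x |χ_{ω,n}| = O(n^{1/q+ε})`.

The corrector solves the Poisson equation `χ_n = R_{ω_n} (f_{θ^{n+1} ω} + χ_{n+1})`, hence
`M_{n+1} = g(X_{n+1}) - (R_{ω_n} g)(X_n)` with `g = f_{θ^{n+1} ω} + χ_{n+1}`, a martingale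
difference by the Markov property. Finally `S_n - ∑ M_j = f_ω(X_0) + χ_0(X_0) - χ_{n-1}(X_{n-1})`
telescopes.
-/

lemma shift_iterate_apply {𝒴 : Type*} (ω : ℤ → 𝒴) (n : ℕ) (s : ℤ) :
    shift^[n] ω s = ω (s + n) := by
  induction n generalizing ω with
  | zero => simp
  | succ n ih => rw [Function.iterate_succ_apply, ih]; simp only [shift]; push_cast; ring_nf

instance Rcomp.isMarkovKernel {𝒴 : Type*} (R : 𝒴 → Kernel X X) [∀ y, IsMarkovKernel (R y)]
    (n : ℕ) (ω : ℤ → 𝒴) : IsMarkovKernel (Rcomp R n ω) := by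
  induction n generalizing ω with
  | zero => rw [Rcomp]; infer_instance
  | succ n ih => rw [Rcomp]; infer_instance

lemma integrable_of_forall_abs_le {α : Type*} [MeasurableSpace α] {ν : Measure α}
    [IsFiniteMeasure ν] {g : α → ℝ} (hg : Measurable g) {c : ℝ} (hc : ∀ y, |g y| ≤ c) :
    Integrable g ν :=
  .of_bound hg.aestronglyMeasurable c (ae_of_all _ fun y => (Real.norm_eq_abs _).trans_le (hc y))

lemma abs_integral_le_of_forall_abs_le {α : Type*} [MeasurableSpace α] {ν : Measure α}
    [IsProbabilityMeasure ν] {g : α → ℝ} {c : ℝ} (hc : ∀ y, |g y| ≤ c) : |∫ y, g y ∂ν| ≤ c := by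
  simpa using norm_integral_le_of_norm_le_const (μ := ν)
    (ae_of_all _ fun y => (Real.norm_eq_abs _).trans_le (hc y))

section MarkovChain

variable {Ω' : Type*} [m' : MeasurableSpace Ω'] {P' : Measure Ω'} {Xc : ℕ → Ω' → X}
  {κ : Kernel X X} {j : ℕ}

def IsMarkovTransition (P' : Measure Ω') (Xc : ℕ → Ω' → X) (j : ℕ) (κ : Kernel X X) : Prop :=
  ∀ B : Set Ω', MeasurableSet[chainFilt Xc j] B → ∀ Γ : Set X, MeasurableSet Γ →
    P' (B ∩ Xc (j + 1) ⁻¹' Γ) = ∫⁻ a in B, κ (Xc j a) Γ ∂P'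

lemma chainFilt_le (hXc : ∀ i, Measurable (Xc i)) (j : ℕ) : chainFilt Xc j ≤ m' :=
  iSup₂_le fun i _ => (hXc i).comap_le

lemma IsMarkovTransition.map_restrict_succ (hM : IsMarkovTransition P' Xc j κ)
    (hXc : ∀ i, Measurable (Xc i)) {B : Set Ω'} (hB : MeasurableSet[chainFilt Xc j] B) :
    (P'.restrict B).map (Xc (j + 1)) = κ ∘ₘ (P'.restrict B).map (Xc j) := by
  ext Γ hΓ
  rw [Measure.map_apply (hXc _) hΓ, Measure.restrict_apply (hXc _ hΓ),
    Measure.bind_apply hΓ κ.aemeasurable, lintegral_map (κ.measurable_coe hΓ) (hXc j),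
    Set.inter_comm, hM B hB Γ hΓ]

lemma IsMarkovTransition.setIntegral_comp_succ [IsFiniteMeasure P'] [IsMarkovKernel κ]
    (hM : IsMarkovTransition P' Xc j κ) (hXc : ∀ i, Measurable (Xc i)) {B : Set Ω'}
    (hB : MeasurableSet[chainFilt Xc j] B) {h : X → ℝ} (hh : Measurable h) {c : ℝ}
    (hc : ∀ x, |h x| ≤ c) :
    ∫ a in B, h (Xc (j + 1) a) ∂P' = ∫ a in B, ∫ y, h y ∂κ (Xc j a) ∂P' := by
  have hint : Integrable h (κ ∘ₘ (P'.restrict B).map (Xc j)) := integrable_of_forall_abs_le hh hc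
  rw [← integral_map (hXc _).aemeasurable hh.aestronglyMeasurable, hM.map_restrict_succ hXc hB,
    ← integral_map (hXc j).aemeasurable hh.stronglyMeasurable.integral_kernel.aestronglyMeasurable]
  rw [Measure.comp_eq_comp_const_apply] at hint ⊢
  rw [Kernel.integral_comp hint, Kernel.const_apply]

lemma IsMarkovTransition.condExp_sub_integral_eq_zero [IsFiniteMeasure P'] [IsMarkovKernel κ]
    (hM : IsMarkovTransition P' Xc j κ) (hXc : ∀ i, Measurable (Xc i)) {h : X → ℝ}
    (hh : Measurable h) {c : ℝ} (hc : ∀ x, |h x| ≤ c) :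
    P'[fun a => h (Xc (j + 1) a) - ∫ y, h y ∂κ (Xc j a) | chainFilt Xc j] =ᵐ[P'] 0 := by
  have hκh : Measurable fun x => ∫ y, h y ∂κ x := hh.stronglyMeasurable.integral_kernel.measurable
  have hint₁ : Integrable (fun a => h (Xc (j + 1) a)) P' :=
    integrable_of_forall_abs_le (hh.comp (hXc _)) fun a => hc _
  have hint₂ : Integrable (fun a => ∫ y, h y ∂κ (Xc j a)) P' :=
    integrable_of_forall_abs_le (hκh.comp (hXc j)) fun a => abs_integral_le_of_forall_abs_le hc
  refine (ae_eq_condExp_of_forall_setIntegral_eq (chainFilt_le hXc j) (hint₁.sub hint₂)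
    (fun _ _ _ => integrableOn_zero) (fun B hB _ => ?_) aestronglyMeasurable_const).symm
  simp only [Pi.sub_apply]
  rw [integral_sub hint₁.integrableOn hint₂.integrableOn, hM.setIntegral_comp_succ hXc hB hh hc,
    sub_self, integral_zero]

end MarkovChain

lemma summable_rpow_mul_geometric {r : ℝ} (hr₀ : 0 < r) (hr₁ : r < 1) (e : ℝ) :
    Summable fun k : ℕ => ((k : ℝ) + 1) ^ e * r ^ k := by
  obtain ⟨N, hN⟩ := exists_nat_ge e
  have hpow : Summable fun k : ℕ => ((k + 1 : ℕ) : ℝ) ^ N * r ^ (k + 1) :=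
    (summable_nat_add_iff (f := fun n : ℕ => (n : ℝ) ^ N * r ^ n) 1).2 <|
      summable_pow_mul_geometric_of_norm_lt_one N (by rwa [Real.norm_of_nonneg hr₀.le])
  refine Summable.of_nonneg_of_le (fun k => by positivity) (fun k => ?_) (hpow.mul_left r⁻¹)
  calc ((k : ℝ) + 1) ^ e * r ^ k ≤ ((k : ℝ) + 1) ^ (N : ℝ) * r ^ k := by
        gcongr
        linarith [k.cast_nonneg (α := ℝ)]
    _ = r⁻¹ * (((k + 1 : ℕ) : ℝ) ^ N * r ^ (k + 1)) := by
        rw [Real.rpow_natCast, pow_succ]; push_cast; field_simp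

section Growth

variable {α : Type*} [MeasurableSpace α] {P : Measure α} {T : α → α} {G : α → ℝ} {p e : ℝ}

lemma ae_eventually_abs_comp_iterate_lt (hT : MeasurePreserving T P P) (hp : 0 < p)
    (hG : MemLp G (ENNReal.ofReal p) P) (he : 1 < p * e) :
    ∀ᵐ ω ∂P, ∀ᶠ j in atTop, |G (T^[j] ω)| < ((j : ℝ) + 1) ^ e := by
  have hchebyshev : ∀ j : ℕ, P {ω | ((j : ℝ) + 1) ^ e ≤ |G (T^[j] ω)|}
      ≤ ENNReal.ofReal (((j : ℝ) + 1) ^ (p * e))⁻¹ * eLpNorm G (ENNReal.ofReal p) P ^ p := by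
    intro j
    have hj : (0 : ℝ) < (j : ℝ) + 1 := by positivity
    have hset : {ω | ((j : ℝ) + 1) ^ e ≤ |G (T^[j] ω)|}
        = T^[j] ⁻¹' {ω | ENNReal.ofReal (((j : ℝ) + 1) ^ e) ≤ ‖G ω‖ₑ} := by
      ext ω
      simp [Real.enorm_eq_ofReal_abs, ENNReal.ofReal_le_ofReal_iff (abs_nonneg _)]
    rw [hset, (hT.iterate j).measure_preimage
      (nullMeasurableSet_le aemeasurable_const hG.1.enorm)]
    refine (meas_ge_le_mul_pow_eLpNorm_enorm P (by simpa using hp) ENNReal.ofReal_ne_top hG.1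
      (by simpa using Real.rpow_pos_of_pos hj e) (by simp)).trans_eq ?_
    rw [ENNReal.toReal_ofReal hp.le, ← ENNReal.ofReal_inv_of_pos (by positivity),
      ENNReal.ofReal_rpow_of_nonneg (by positivity) hp.le, Real.inv_rpow (by positivity),
      ← Real.rpow_mul hj.le, mul_comm e p]
  have hsum : Summable fun j : ℕ => (((j : ℝ) + 1) ^ (p * e))⁻¹ :=
    ((Real.summable_one_div_nat_add_rpow 1 _).2 he).congr fun j => by
      rw [abs_of_pos (by positivity), one_div]
  have hfinite : ∑' j : ℕ, P {ω | ((j : ℝ) + 1) ^ e ≤ |G (T^[j] ω)|} ≠ ⊤ := by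
    refine ne_top_of_le_ne_top ?_ (ENNReal.tsum_le_tsum hchebyshev)
    rw [ENNReal.tsum_mul_right, ← ENNReal.ofReal_tsum_of_nonneg (fun j => by positivity) hsum]
    exact ENNReal.mul_ne_top ENNReal.ofReal_ne_top (ENNReal.rpow_ne_top_of_nonneg hp.le hG.2.ne)
  filter_upwards [ae_eventually_notMem hfinite] with ω hω
  simpa using hω

lemma ae_exists_abs_comp_iterate_le (hT : MeasurePreserving T P P) (hp : 0 < p)
    (hG : MemLp G (ENNReal.ofReal p) P) (he : 1 < p * e) :
    ∀ᵐ ω ∂P, ∃ C, 0 < C ∧ ∀ j : ℕ, |G (T^[j] ω)| ≤ C * ((j : ℝ) + 1) ^ e := by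
  filter_upwards [ae_eventually_abs_comp_iterate_lt hT hp hG he] with ω hω
  have hbig : (fun j : ℕ => G (T^[j] ω)) =O[atTop] fun j : ℕ => ((j : ℝ) + 1) ^ e :=
    .of_bound 1 <| hω.mono fun j hj => by
      rw [Real.norm_eq_abs, Real.norm_of_nonneg (by positivity), one_mul]; exact hj.le
  obtain ⟨C, hC, hCle⟩ := Asymptotics.bound_of_isBigO_nat_atTop hbig
  refine ⟨C, hC, fun j => ?_⟩
  simpa [Real.norm_of_nonneg (by positivity : (0 : ℝ) ≤ ((j : ℝ) + 1) ^ e)] using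
    hCle (x := j) (by positivity)

end Growth

section OpDist

variable (κ : Kernel X X) [IsMarkovKernel κ] (ν : Measure X) [IsProbabilityMeasure ν]

lemma abs_integral_sub_integral_le_opDist {g : X → ℝ} (hg : Measurable g)
    (hg₁ : ∀ y, |g y| ≤ 1) (x : X) : |∫ y, g y ∂(κ x) - ∫ y, g y ∂ν| ≤ opDist κ ν := by
  refine le_csSup ⟨2, ?_⟩ ⟨g, hg, hg₁, x, rfl⟩
  rintro _ ⟨g, -, hg₁, x, rfl⟩
  linarith [abs_sub (∫ y, g y ∂(κ x)) (∫ y, g y ∂ν), abs_integral_le_of_forall_abs_le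
    (ν := κ x) hg₁, abs_integral_le_of_forall_abs_le (ν := ν) hg₁]

lemma opDist_nonneg [Nonempty X] : 0 ≤ opDist κ ν :=
  (abs_nonneg _).trans <| abs_integral_sub_integral_le_opDist κ ν (g := fun _ => 0)
    measurable_const (fun _ => by simp) (Classical.arbitrary X)

lemma abs_integral_sub_integral_le_mul_opDist {g : X → ℝ} (hg : Measurable g) {c : ℝ}
    (hc : ∀ y, |g y| ≤ c) (x : X) :
    |∫ y, g y ∂(κ x) - ∫ y, g y ∂ν| ≤ c * opDist κ ν := by
  rcases ((abs_nonneg _).trans (hc x)).eq_or_lt with rfl | hc₀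
  · simp [fun y => abs_nonpos_iff.1 (hc y)]
  have h := abs_integral_sub_integral_le_opDist κ ν (hg.const_mul c⁻¹) (fun y => by
    rw [abs_mul, abs_inv, abs_of_pos hc₀]; exact inv_mul_le_one_of_le₀ (hc y) hc₀.le) x
  rwa [integral_const_mul, integral_const_mul, ← mul_sub, abs_mul, abs_inv, abs_of_pos hc₀,
    inv_mul_le_iff₀ hc₀] at h

end OpDist

def correctorTerm (R : 𝒴 → Kernel X X) (f : (ℤ → 𝒴) × X → ℝ) (ω : ℤ → 𝒴) (n k : ℕ) (x : X) :
    ℝ :=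
  ∫ y, f (shift^[n + 1 + k] ω, y) ∂((Rcomp R (k + 1) (shift^[n] ω)) x)

section Corrector

variable {𝒴 : Type*} {R : 𝒴 → Kernel X X} {f : (ℤ → 𝒴) × X → ℝ} {ω : ℤ → 𝒴}
  {F : (ℤ → 𝒴) → ℝ}

lemma corrector_eq_tsum (n : ℕ) (x : X) :
    corrector R f ω n x = ∑' k, correctorTerm R f ω n k x := rfl

lemma Rcomp_succ_shift_iterate (k n : ℕ) :
    Rcomp R (k + 1) (shift^[n] ω) = Rcomp R k (shift^[n + 1] ω) ∘ₖ R (ω n) := by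
  rw [Rcomp, ← Function.iterate_succ_apply' shift, shift_iterate_apply, zero_add]

lemma correctorTerm_zero (n : ℕ) (x : X) :
    correctorTerm R f ω n 0 x = ∫ y, f (shift^[n + 1] ω, y) ∂(R (ω n) x) := by
  rw [correctorTerm, Rcomp_succ_shift_iterate, Rcomp, Kernel.id_comp, add_zero]

lemma correctorTerm_succ [∀ y, IsMarkovKernel (R y)] (hf : ∀ ω, Measurable fun x => f (ω, x))
    (hF : ∀ ω x, |f (ω, x)| ≤ F ω) (n k : ℕ) (x : X) :
    correctorTerm R f ω n (k + 1) x = ∫ y, correctorTerm R f ω (n + 1) k y ∂(R (ω n) x) := by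
  rw [correctorTerm, Rcomp_succ_shift_iterate, Kernel.integral_comp
    (integrable_of_forall_abs_le (hf _) (hF _)), show n + 1 + (k + 1) = n + 1 + 1 + k by ring]
  rfl

lemma measurable_correctorTerm (hf : ∀ ω, Measurable fun x => f (ω, x)) (n k : ℕ) :
    Measurable (correctorTerm R f ω n k) :=
  (hf _).stronglyMeasurable.integral_kernel.measurable

lemma measurable_corrector (hf : ∀ ω, Measurable fun x => f (ω, x)) (n : ℕ) :
    Measurable (corrector R f ω n) :=
  Measurable.tsum fun k => measurable_correctorTerm hf n k

lemma abs_corrector_le {n : ℕ} {b : ℕ → ℝ} (hbs : Summable b)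
    (hb : ∀ k x, |correctorTerm R f ω n k x| ≤ b k) (x : X) :
    |corrector R f ω n x| ≤ ∑' k, b k := by
  rw [corrector_eq_tsum, ← Real.norm_eq_abs]
  exact tsum_of_norm_bounded hbs.hasSum fun k => (Real.norm_eq_abs _).trans_le (hb k x)

lemma abs_correctorTerm_le_mul_opDist [∀ y, IsMarkovKernel (R y)]
    (hf : ∀ ω, Measurable fun x => f (ω, x)) (hF : ∀ ω x, |f (ω, x)| ≤ F ω) {n k : ℕ}
    (ν : Measure X) [IsProbabilityMeasure ν] (hmean : ∫ y, f (shift^[n + 1 + k] ω, y) ∂ν = 0)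
    (x : X) :
    |correctorTerm R f ω n k x|
      ≤ F (shift^[n + 1 + k] ω) * opDist (Rcomp R (k + 1) (shift^[n] ω)) ν := by
  have h := abs_integral_sub_integral_le_mul_opDist (Rcomp R (k + 1) (shift^[n] ω)) ν
    (hf (shift^[n + 1 + k] ω)) (hF _) x
  rwa [hmean, sub_zero] at h

lemma abs_correctorTerm_le_of_orbit_bounds [∀ y, IsMarkovKernel (R y)]
    {μ : (ℤ → 𝒴) → Measure X} [∀ ω, IsProbabilityMeasure (μ ω)]
    (hf : ∀ ω, Measurable fun x => f (ω, x)) (hF : ∀ ω x, |f (ω, x)| ≤ F ω)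
    {K : (ℤ → 𝒴) → ℝ} {r CK CF eK eF : ℝ} (hr₀ : 0 ≤ r) (hr₁ : r ≤ 1) (hCF : 0 ≤ CF)
    (heF : 0 ≤ eF) (hmean : ∀ m : ℕ, ∫ x, f (shift^[m] ω, x) ∂(μ (shift^[m] ω)) = 0)
    (hrate : ∀ j n : ℕ, opDist (Rcomp R n (shift^[j] ω)) (μ (shift^[n] (shift^[j] ω)))
      ≤ K (shift^[j] ω) * r ^ n)
    (hK : ∀ j : ℕ, |K (shift^[j] ω)| ≤ CK * ((j : ℝ) + 1) ^ eK)
    (hFω : ∀ j : ℕ, |F (shift^[j] ω)| ≤ CF * ((j : ℝ) + 1) ^ eF) (n k : ℕ) (x : X) :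
    |correctorTerm R f ω n k x|
      ≤ 2 ^ eF * CF * CK * ((n : ℝ) + 1) ^ (eF + eK) * (((k : ℝ) + 1) ^ eF * r ^ k) := by
  have : Nonempty X := ⟨x⟩
  have hod : opDist (Rcomp R (k + 1) (shift^[n] ω)) (μ (shift^[n + 1 + k] ω))
      ≤ CK * ((n : ℝ) + 1) ^ eK * r ^ k := by
    have h := hrate n (k + 1)
    rw [← Function.iterate_add_apply, show k + 1 + n = n + 1 + k by ring] at h
    exact h.trans (mul_le_mul ((le_abs_self _).trans (hK n))
      (pow_le_pow_of_le_one hr₀ hr₁ k.le_succ) (by positivity) ((abs_nonneg _).trans (hK n)))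
  -- `n + k + 2 ≤ 2 (n + 1) (k + 1)` separates the growth of `F` along the orbit into `n` and `k`.
  have hFle : F (shift^[n + 1 + k] ω)
      ≤ CF * (2 ^ eF * (((n : ℝ) + 1) ^ eF * ((k : ℝ) + 1) ^ eF)) := by
    refine (le_abs_self _).trans ((hFω _).trans (mul_le_mul_of_nonneg_left ?_ hCF))
    rw [← Real.mul_rpow (by positivity) (by positivity),
      ← Real.mul_rpow (by positivity) (by positivity)]
    exact Real.rpow_le_rpow (by positivity) (by push_cast; nlinarith) heF
  calc |correctorTerm R f ω n k x|
      ≤ F (shift^[n + 1 + k] ω)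
          * opDist (Rcomp R (k + 1) (shift^[n] ω)) (μ (shift^[n + 1 + k] ω)) :=
        abs_correctorTerm_le_mul_opDist hf hF _ (hmean _) x
    _ ≤ CF * (2 ^ eF * (((n : ℝ) + 1) ^ eF * ((k : ℝ) + 1) ^ eF))
          * (CK * ((n : ℝ) + 1) ^ eK * r ^ k) :=
        mul_le_mul hFle hod (opDist_nonneg _ _) (by positivity)
    _ = 2 ^ eF * CF * CK * ((n : ℝ) + 1) ^ (eF + eK) * (((k : ℝ) + 1) ^ eF * r ^ k) := by
        rw [Real.rpow_add (by positivity)]; ring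

lemma corrector_eq_integral [∀ y, IsMarkovKernel (R y)] (hf : ∀ ω, Measurable fun x => f (ω, x))
    (hF : ∀ ω x, |f (ω, x)| ≤ F ω) {B : ℕ → ℕ → ℝ} (hBs : ∀ n, Summable (B n))
    (hB : ∀ n k x, |correctorTerm R f ω n k x| ≤ B n k) (n : ℕ) (x : X) :
    corrector R f ω n x
      = ∫ y, (f (shift^[n + 1] ω, y) + corrector R f ω (n + 1) y) ∂(R (ω n) x) := by
  have hint : ∀ k, Integrable (correctorTerm R f ω (n + 1) k) (R (ω n) x) := fun k =>
    integrable_of_forall_abs_le (measurable_correctorTerm hf _ _) (hB _ k)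
  have hsum : Summable fun k => ∫ y, ‖correctorTerm R f ω (n + 1) k y‖ ∂(R (ω n) x) :=
    .of_nonneg_of_le (fun k => integral_nonneg fun _ => norm_nonneg _)
      (fun k => (le_abs_self _).trans (abs_integral_le_of_forall_abs_le fun y => by
        simpa using hB (n + 1) k y)) (hBs (n + 1))
  rw [corrector_eq_tsum, ((hBs n).of_norm_bounded fun k => hB n k x).tsum_eq_zero_add,
    correctorTerm_zero, integral_add (integrable_of_forall_abs_le (hf _) (hF _))
      (integrable_of_forall_abs_le (measurable_corrector hf _)
        (abs_corrector_le (hBs (n + 1)) (hB (n + 1))))]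
  simp_rw [correctorTerm_succ hf hF, integral_tsum_of_summable_integral_norm hint hsum]
  rfl

lemma condExp_coboundaryIncrement_eq_zero [∀ y, IsMarkovKernel (R y)]
    (hf : ∀ ω, Measurable fun x => f (ω, x)) (hF : ∀ ω x, |f (ω, x)| ≤ F ω) {B : ℕ → ℕ → ℝ}
    (hBs : ∀ n, Summable (B n)) (hB : ∀ n k x, |correctorTerm R f ω n k x| ≤ B n k)
    {Ω' : Type*} [MeasurableSpace Ω'] {P' : Measure Ω'} [IsFiniteMeasure P'] {Xc : ℕ → Ω' → X}
    (hXc : ∀ i, Measurable (Xc i)) {j : ℕ} (hM : IsMarkovTransition P' Xc j (R (ω j))) :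
    P'[fun a => f (shift^[j + 1] ω, Xc (j + 1) a) + corrector R f ω (j + 1) (Xc (j + 1) a)
      - corrector R f ω j (Xc j a) | chainFilt Xc j] =ᵐ[P'] 0 := by
  simp_rw [corrector_eq_integral hf hF hBs hB j]
  exact hM.condExp_sub_integral_eq_zero hXc ((hf _).add (measurable_corrector hf _))
    fun x => (abs_add_le _ _).trans (add_le_add (hF _ x) (abs_corrector_le (hBs _) (hB _) x))

end Corrector

lemma ae_exists_abs_correctorTerm_le {P : Measure (ℤ → 𝒴)} (hP : MeasurePreserving shift P P)
    {R : 𝒴 → Kernel X X} [∀ y, IsMarkovKernel (R y)] {μ : (ℤ → 𝒴) → Measure X}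
    [∀ ω, IsProbabilityMeasure (μ ω)] {ρ : ℝ} (hρ : ρ ∈ Set.Ioo (0 : ℝ) 1)
    (hrates : EffectiveRates P R μ ρ) {f : (ℤ → 𝒴) × X → ℝ}
    (hf : ∀ ω, Measurable fun x => f (ω, x)) {F : (ℤ → 𝒴) → ℝ} (hF : ∀ ω x, |f (ω, x)| ≤ F ω)
    {q : ℝ} (hq : 0 < q) (hFq : MemLp F (ENNReal.ofReal q) P)
    (hmean : ∀ᵐ ω ∂P, ∫ x, f (ω, x) ∂(μ ω) = 0) {δ : ℝ} (hδ : 0 < δ) :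
    ∀ᵐ ω ∂P, ∃ (D : ℝ) (b : ℕ → ℝ), 0 ≤ D ∧ (∀ k, 0 ≤ b k) ∧ Summable b ∧
      ∀ n k x, |correctorTerm R f ω n k x| ≤ D * ((n : ℝ) + 1) ^ (1 / q + δ) * b k := by
  -- `p` is chosen so that `p * (δ / 2) > 1`: then `K (θ^n ω) = O(n^{δ/2})` along a.e. orbit.
  set p : ℝ := 1 + 4 / δ
  set eF : ℝ := 1 / q + δ / 2
  set r : ℝ := ρ ^ (1 / p)
  have hp : 0 < p := by positivity
  have hr₀ : 0 < r := Real.rpow_pos_of_pos hρ.1 _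
  have hr₁ : r < 1 := Real.rpow_lt_one hρ.1.le hρ.2 (by positivity)
  obtain ⟨K, hKp, hKrate⟩ := hrates p (by linarith [div_pos four_pos hδ])
  have hmean' : ∀ᵐ ω ∂P, ∀ m : ℕ, ∫ x, f (shift^[m] ω, x) ∂(μ (shift^[m] ω)) = 0 :=
    ae_all_iff.2 fun m => (hP.iterate m).quasiMeasurePreserving.ae hmean
  have hrate : ∀ᵐ ω ∂P, ∀ n : ℕ, opDist (Rcomp R n ω) (μ (shift^[n] ω)) ≤ K ω * r ^ n :=
    hKrate.mono fun ω h n => by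
      rw [← Real.rpow_natCast, ← Real.rpow_mul hρ.1.le, one_div_mul_eq_div]
      exact (le_max_right _ _).trans (h n)
  have hrate' : ∀ᵐ ω ∂P, ∀ j n : ℕ, opDist (Rcomp R n (shift^[j] ω))
      (μ (shift^[n] (shift^[j] ω))) ≤ K (shift^[j] ω) * r ^ n :=
    ae_all_iff.2 fun j => (hP.iterate j).quasiMeasurePreserving.ae hrate
  have hKgrowth := ae_exists_abs_comp_iterate_le hP hp hKp (e := δ / 2) (by
    rw [mul_div_assoc', add_mul, div_mul_cancel₀ _ hδ.ne']; linarith)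
  have hFgrowth := ae_exists_abs_comp_iterate_le hP hq hFq (e := eF) (by
    rw [mul_add, mul_one_div_cancel hq.ne']; linarith [mul_pos hq (half_pos hδ)])
  filter_upwards [hmean', hrate', hKgrowth, hFgrowth]
    with ω hmeanω hrateω ⟨CK, hCK, hKω⟩ ⟨CF, hCF, hFω⟩
  refine ⟨2 ^ eF * CF * CK, fun k => ((k : ℝ) + 1) ^ eF * r ^ k, by positivity,
    fun k => by positivity, summable_rpow_mul_geometric hr₀ hr₁ eF, fun n k x => ?_⟩
  have h := abs_correctorTerm_le_of_orbit_bounds hf hF hr₀.le hr₁.le hCF.le (by positivity)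
    hmeanω hrateω hKω hFω n k x
  rwa [show eF + δ / 2 = 1 / q + δ by ring] at h

lemma ae_corrector_growth {P : Measure (ℤ → 𝒴)} (hP : MeasurePreserving shift P P)
    {R : 𝒴 → Kernel X X} [∀ y, IsMarkovKernel (R y)] {μ : (ℤ → 𝒴) → Measure X}
    [∀ ω, IsProbabilityMeasure (μ ω)] {ρ : ℝ} (hρ : ρ ∈ Set.Ioo (0 : ℝ) 1)
    (hrates : EffectiveRates P R μ ρ) {f : (ℤ → 𝒴) × X → ℝ}
    (hf : ∀ ω, Measurable fun x => f (ω, x)) {F : (ℤ → 𝒴) → ℝ} (hF : ∀ ω x, |f (ω, x)| ≤ F ω)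
    {q : ℝ} (hq : 0 < q) (hFq : MemLp F (ENNReal.ofReal q) P)
    (hmean : ∀ᵐ ω ∂P, ∫ x, f (ω, x) ∂(μ ω) = 0) :
    ∀ᵐ ω ∂P, ∀ ε : ℝ, 0 < ε →
      ∃ D : ℝ, ∀ n x, |corrector R f ω n x| ≤ D * ((n : ℝ) + 1) ^ (1 / q + ε) := by
  filter_upwards [ae_all_iff.2 fun i : ℕ => ae_exists_abs_correctorTerm_le hP hρ hrates hf hF hq
    hFq hmean (δ := 1 / ((i : ℝ) + 1)) (by positivity)] with ω hω
  intro ε hε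
  choose D b hD hb hbs hbound using hω
  obtain ⟨i, hi⟩ := exists_nat_one_div_lt hε
  refine ⟨D i * ∑' k, b i k, fun n x => ?_⟩
  calc |corrector R f ω n x|
      ≤ ∑' k, D i * ((n : ℝ) + 1) ^ (1 / q + 1 / ((i : ℝ) + 1)) * b i k :=
        abs_corrector_le ((hbs i).mul_left _) (hbound i n) x
    _ = D i * (∑' k, b i k) * ((n : ℝ) + 1) ^ (1 / q + 1 / ((i : ℝ) + 1)) := by
        rw [tsum_mul_left]; ring
    _ ≤ D i * (∑' k, b i k) * ((n : ℝ) + 1) ^ (1 / q + ε) :=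
        mul_le_mul_of_nonneg_left (Real.rpow_le_rpow_of_exponent_le
          (by linarith [n.cast_nonneg (α := ℝ)]) (by linarith))
          (mul_nonneg (hD i) (tsum_nonneg (hb i)))

lemma sum_range_sub_sum_Icc_coboundary (u v : ℕ → ℝ) (m : ℕ) :
    ∑ j ∈ Finset.range (m + 1), u j - ∑ j ∈ Finset.Icc 1 m, (u j + v j - v (j - 1))
      = u 0 + v 0 - v m := by
  induction m with
  | zero => simp
  | succ m ih =>
    rw [Finset.sum_range_succ, Finset.sum_Icc_succ_top (by omega), Nat.add_sub_cancel]
    linarith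

lemma abs_sum_range_sub_sum_Icc_coboundary_le (u v : ℕ → ℝ) {A D e : ℝ} (he : 0 ≤ e)
    (hu : |u 0| ≤ A) (hv : ∀ j, |v j| ≤ D * ((j : ℝ) + 1) ^ e) {n : ℕ} (hn : 1 ≤ n) :
    |∑ j ∈ Finset.range n, u j - ∑ j ∈ Finset.Icc 1 (n - 1), (u j + v j - v (j - 1))|
      ≤ (A + 2 * D) * (n : ℝ) ^ e := by
  obtain ⟨m, rfl⟩ := Nat.exists_eq_add_of_le' hn
  have hv₀ : |v 0| ≤ D := by simpa using hv 0
  have h₁ : (1 : ℝ) ≤ ((m : ℝ) + 1) ^ e :=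
    Real.one_le_rpow (by linarith [m.cast_nonneg (α := ℝ)]) he
  rw [Nat.add_sub_cancel, sum_range_sub_sum_Icc_coboundary, Nat.cast_add_one]
  have hA : 0 ≤ A := (abs_nonneg _).trans hu
  have hD : 0 ≤ D := (abs_nonneg _).trans hv₀
  calc |u 0 + v 0 - v m| ≤ |u 0| + |v 0| + |v m| := by
        linarith [abs_sub (u 0 + v 0) (v m), abs_add_le (u 0) (v 0)]
    _ ≤ A + D + D * ((m : ℝ) + 1) ^ e := by linarith [hv m]
    _ ≤ (A + 2 * D) * ((m : ℝ) + 1) ^ e := by nlinarith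

theorem martingale_coboundary_decomposition_general
    (P : Measure (ℤ → 𝒴)) (herg : Ergodic shift P)
    (R : 𝒴 → Kernel X X) [∀ y, IsMarkovKernel (R y)]
    (μ : (ℤ → 𝒴) → Measure X) (hμprob : ∀ ω, IsProbabilityMeasure (μ ω))
    (ρ : ℝ) (hρ : ρ ∈ Set.Ioo (0 : ℝ) 1) (hrates : EffectiveRates P R μ ρ)
    (f : (ℤ → 𝒴) × X → ℝ) (hf : Measurable f)
    (q : ℝ) (hq : 0 < q)
    (F : (ℤ → 𝒴) → ℝ) (hFenv : ∀ ω x, |f (ω, x)| ≤ F ω)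
    (hFq : MemLp F (ENNReal.ofReal q) P)
    (hmean : ∀ᵐ ω ∂P, ∫ x, f (ω, x) ∂(μ ω) = 0) :
    ∀ᵐ ω ∂P, ∀ (Ω' : Type) [m' : MeasurableSpace Ω'] (P' : Measure Ω')
      (Xc : ℕ → Ω' → X),
      IsProbabilityMeasure P' →
      (∀ j, Measurable (Xc j)) →
      (∀ Γ : Set X, MeasurableSet Γ → P' (Xc 0 ⁻¹' Γ) = μ ω Γ) →
      (∀ j : ℕ, ∀ B : Set Ω', MeasurableSet[chainFilt Xc j] B →
        ∀ Γ : Set X, MeasurableSet Γ →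
          P' (B ∩ Xc (j + 1) ⁻¹' Γ) = ∫⁻ a in B, R (ω (j : ℤ)) (Xc j a) Γ ∂P') →
      ((∀ n : ℕ, 1 ≤ n →
          P'[fun a => f (shift^[n] ω, Xc n a) + corrector R f ω n (Xc n a)
              - corrector R f ω (n - 1) (Xc (n - 1) a) | chainFilt Xc (n - 1)]
            =ᵐ[P'] 0) ∧
        ∀ ε : ℝ, 0 < ε → ∃ C : ℝ, ∀ n : ℕ, 1 ≤ n → ∀ᵐ a ∂P',
          |(∑ j ∈ Finset.range n, f (shift^[j] ω, Xc j a)) -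
              ∑ j ∈ Finset.Icc 1 (n - 1),
                (f (shift^[j] ω, Xc j a) + corrector R f ω j (Xc j a)
                  - corrector R f ω (j - 1) (Xc (j - 1) a))| ≤
            C * (n : ℝ) ^ (1 / q + ε)) := by
  have hfω : ∀ ω, Measurable fun x => f (ω, x) := fun ω => hf.comp measurable_prodMk_left
  have hP := herg.toMeasurePreserving
  filter_upwards [ae_exists_abs_correctorTerm_le hP hρ hrates hfω hFenv hq hFq hmean one_pos,
    ae_corrector_growth hP hρ hrates hfω hFenv hq hFq hmean]
    with ω ⟨_, _, _, _, hbs, hb⟩ hgrowth Ω' _ P' Xc _ hXc _ hchain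
  refine ⟨fun n hn => ?_, fun ε hε => ?_⟩
  · obtain ⟨j, rfl⟩ := Nat.exists_eq_add_of_le' hn
    exact condExp_coboundaryIncrement_eq_zero hfω hFenv (fun n => hbs.mul_left _) hb hXc
      (hchain j)
  · obtain ⟨D, hD⟩ := hgrowth ε hε
    exact ⟨|F ω| + 2 * D, fun n hn => ae_of_all _ fun a =>
      abs_sum_range_sub_sum_Icc_coboundary_le _ _ (by positivity)
        ((hFenv ω _).trans (le_abs_self _)) (fun j => hD j _) hn⟩

/-- **Martingale coboundary decomposition with sup-norm error `O(n^{1/q+ε})`**.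
Under the effective rates, for a.e. `ω` and any Markov chain `(X_{ω,j})` with initial
law `μ_ω` and transitions `R_{θ^j ω}`, the sequence
`M_{ω,n} = f_{θ^n ω}(X_{ω,n}) + χ_{ω,n}(X_{ω,n}) − χ_{ω,n-1}(X_{ω,n-1})` is a
martingale-difference sequence for `σ(X_0,…,X_n)`, and for every `ε > 0` there is a
finite `C_ω` with `|S_n^ω f − Σ_{j=1}^{n-1} M_{ω,j}| ≤ C_ω n^{1/q+ε}` a.s. -/
theorem martingale_coboundary_decomposition
    (P : Measure (ℤ → 𝒴)) [IsProbabilityMeasure P] (herg : Ergodic shift P)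
    (R : 𝒴 → Kernel X X) [∀ y, IsMarkovKernel (R y)]
    (hRmeas : ∀ Γ : Set X, MeasurableSet Γ →
      Measurable fun a : 𝒴 × X => R a.1 a.2 Γ)
    (μ : (ℤ → 𝒴) → Measure X) (hμprob : ∀ ω, IsProbabilityMeasure (μ ω))
    (hμmeas : ∀ Γ : Set X, MeasurableSet Γ → Measurable fun ω => μ ω Γ)
    (hequi : Equivariant P R μ)
    (ρ : ℝ) (hρ : ρ ∈ Set.Ioo (0 : ℝ) 1) (hrates : EffectiveRates P R μ ρ)
    (f : (ℤ → 𝒴) × X → ℝ) (hf : Measurable f)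
    (q : ℝ) (hq : 0 < q)
    (F : (ℤ → 𝒴) → ℝ) (hFenv : ∀ ω x, |f (ω, x)| ≤ F ω)
    (hFq : MemLp F (ENNReal.ofReal q) P)
    (hmean : ∀ᵐ ω ∂P, ∫ x, f (ω, x) ∂(μ ω) = 0) :
    ∀ᵐ ω ∂P, ∀ (Ω' : Type) [m' : MeasurableSpace Ω'] (P' : Measure Ω')
      (Xc : ℕ → Ω' → X),
      IsProbabilityMeasure P' →
      (∀ j, Measurable (Xc j)) →
      (∀ Γ : Set X, MeasurableSet Γ → P' (Xc 0 ⁻¹' Γ) = μ ω Γ) →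
      (∀ j : ℕ, ∀ B : Set Ω', MeasurableSet[chainFilt Xc j] B →
        ∀ Γ : Set X, MeasurableSet Γ →
          P' (B ∩ Xc (j + 1) ⁻¹' Γ) = ∫⁻ a in B, R (ω (j : ℤ)) (Xc j a) Γ ∂P') →
      ((∀ n : ℕ, 1 ≤ n →
          P'[fun a => f (shift^[n] ω, Xc n a) + corrector R f ω n (Xc n a)
              - corrector R f ω (n - 1) (Xc (n - 1) a) | chainFilt Xc (n - 1)]
            =ᵐ[P'] 0) ∧
        ∀ ε : ℝ, 0 < ε → ∃ C : ℝ, ∀ n : ℕ, 1 ≤ n → ∀ᵐ a ∂P',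
          |(∑ j ∈ Finset.range n, f (shift^[j] ω, Xc j a)) -
              ∑ j ∈ Finset.Icc 1 (n - 1),
                (f (shift^[j] ω, Xc j a) + corrector R f ω j (Xc j a)
                  - corrector R f ω (j - 1) (Xc (j - 1) a))| ≤
            C * (n : ℝ) ^ (1 / q + ε)) :=
  martingale_coboundary_decomposition_general P herg R μ hμprob ρ hρ hrates f hf q hq F hFenv hFq
    hmean

end
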